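/- If p, q ∈ K* with p ≠ 1 and q ≠ 1, then the Gaddis two-parameter quantum Heisenberg algebra GH_{p,q} is not isomorphic to any generalized Heisenberg algebra H(λt) with λ ∈ K*, λ ≠ 1, because their sets of one-dimensional representations have different structures (one is all of K², the other is the union of two lines {αβ = 0}). -/

import Mathlib

noncomputable section

open FreeAlgebra Polynomial

variable (K : Type) [Field K]

/-- Relations of `GH_{p,q}`. t = ι 0, x = ι 1, y = ι 2. -/
inductive ghpqRel (p q : K) : FreeAlgebra K (Fin 3) → FreeAlgebra K (Fin 3) → Prop
  | r1 : ghpqRel p q (ι K (2 : Fin 3) * ι K (1 : Fin 3) - q • (ι K (1 : Fin 3) * ι K (2 : Fin 3)))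
      (ι K (0 : Fin 3))
  | r2 : ghpqRel p q (ι K (1 : Fin 3) * ι K (0 : Fin 3)) (p • (ι K (0 : Fin 3) * ι K (1 : Fin 3)))
  | r3 : ghpqRel p q (ι K (2 : Fin 3) * ι K (0 : Fin 3)) (p⁻¹ • (ι K (0 : Fin 3) * ι K (2 : Fin 3)))

/-- The Gaddis two-parameter quantum Heisenberg algebra. -/
abbrev GHpq (p q : K) := RingQuot (ghpqRel K p q)

/-- Relations of the generalized Heisenberg algebra `H(f)`. t = ι 0, x = ι 1, y = ι 2. -/
inductive ghaRel (f : Polynomial K) : FreeAlgebra K (Fin 3) → FreeAlgebra K (Fin 3) → Prop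
  | r1 : ghaRel f (ι K (0 : Fin 3) * ι K (1 : Fin 3))
      (ι K (1 : Fin 3) * Polynomial.aeval (ι K (0 : Fin 3)) f)
  | r2 : ghaRel f (ι K (2 : Fin 3) * ι K (0 : Fin 3))
      (Polynomial.aeval (ι K (0 : Fin 3)) f * ι K (2 : Fin 3))
  | r3 : ghaRel f (ι K (2 : Fin 3) * ι K (1 : Fin 3) - ι K (1 : Fin 3) * ι K (2 : Fin 3))
      (Polynomial.aeval (ι K (0 : Fin 3)) f - ι K (0 : Fin 3))

/-- The generalized Heisenberg algebra `H(f)`. -/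
abbrev GHA (f : Polynomial K) := RingQuot (ghaRel K f)

/-! Every algebra map from `H(λt)` to a commutative algebra kills `t`, since `(λ - 1) t = yx - xy`,
so it factors through the generic one-dimensional representation `H(λt) → K[a, b]`,
`t ↦ 0, x ↦ a, y ↦ b`. Every algebra map from `GH_{p,q}` to a domain kills `x` or `y`, so for an
isomorphism `e` the generic representation kills `e x` or `e y`, say `e x`. Hence every
one-dimensional representation of `GH_{p,q}`, being a specialisation of it through `e⁻¹`, kills `x`.
But `t ↦ 0, x ↦ 1, y ↦ 0` does not. Working with `K[a, b]` rather than the points of `K²` keeps the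
argument valid over finite fields. -/

section

variable {K}

namespace GHpq

variable {p q : K}

def t : GHpq K p q := RingQuot.mkAlgHom K (ghpqRel K p q) (ι K 0)

def x : GHpq K p q := RingQuot.mkAlgHom K (ghpqRel K p q) (ι K 1)

def y : GHpq K p q := RingQuot.mkAlgHom K (ghpqRel K p q) (ι K 2)

theorem y_mul_x_sub_smul_x_mul_y : (y * x - q • (x * y) : GHpq K p q) = t := by
  simpa [t, x, y] using RingQuot.mkAlgHom_rel K (ghpqRel.r1 (p := p) (q := q))

theorem x_mul_t : (x * t : GHpq K p q) = p • (t * x) := by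
  simpa [t, x] using RingQuot.mkAlgHom_rel K (ghpqRel.r2 (p := p) (q := q))

def character (a b : K) (hab : a * b = 0) : GHpq K p q →ₐ[K] K :=
  RingQuot.liftAlgHom K ⟨FreeAlgebra.lift K ![0, a, b], by
    rintro _ _ (_ | _ | _) <;> simp [mul_comm b a, hab]⟩

@[simp]
theorem character_x (a b : K) (hab : a * b = 0) : character a b hab (x : GHpq K p q) = a := by
  simp [character, x]

@[simp]
theorem character_y (a b : K) (hab : a * b = 0) : character a b hab (y : GHpq K p q) = b := by
  simp [character, y]

theorem map_x_eq_zero_or_map_y_eq_zero (hp1 : p ≠ 1) (hq1 : q ≠ 1) {R : Type*} [CommRing R]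
    [IsDomain R] [Algebra K R] (f : GHpq K p q →ₐ[K] R) : f x = 0 ∨ f y = 0 := by
  have ht : f t = (1 - q) • (f x * f y) := by
    rw [← y_mul_x_sub_smul_x_mul_y, map_sub, map_smul, map_mul, map_mul, sub_smul, one_smul,
      mul_comm]
  have hxt : f x * f t = p • (f t * f x) := by
    rw [← map_mul, ← map_mul, ← map_smul, x_mul_t]
  have htx : (1 - p) • (f t * f x) = 0 := by
    rw [sub_smul, one_smul, ← hxt, mul_comm, sub_self]
  rw [smul_eq_zero, ht, smul_mul_assoc, smul_eq_zero] at htx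
  simp only [sub_eq_zero, hp1.symm, hq1.symm, false_or, mul_eq_zero] at htx
  tauto

end GHpq

namespace GHA

variable {f : K[X]} {l : K}

def t : GHA K f := RingQuot.mkAlgHom K (ghaRel K f) (ι K 0)

def x : GHA K f := RingQuot.mkAlgHom K (ghaRel K f) (ι K 1)

def y : GHA K f := RingQuot.mkAlgHom K (ghaRel K f) (ι K 2)

theorem y_mul_x_sub_x_mul_y : (y * x - x * y : GHA K f) = aeval t f - t := by
  simpa [t, x, y, ← aeval_algHom_apply] using RingQuot.mkAlgHom_rel K (ghaRel.r3 (f := f))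

theorem y_mul_x_sub_x_mul_y_of_linear : (y * x - x * y : GHA K (C l * X)) = (l - 1) • t := by
  simp [y_mul_x_sub_x_mul_y, Algebra.smul_def, sub_mul]

theorem algHom_ext {A : Type*} [Semiring A] [Algebra K A] {g h : GHA K f →ₐ[K] A}
    (ht : g t = h t) (hx : g x = h x) (hy : g y = h y) : g = h := by
  refine RingQuot.ringQuot_ext' _ _ _ (FreeAlgebra.hom_ext (funext fun i => ?_))
  fin_cases i <;> assumption

def toMvPolynomial (l : K) : GHA K (C l * X) →ₐ[K] MvPolynomial (Fin 2) K :=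
  RingQuot.liftAlgHom K ⟨FreeAlgebra.lift K ![0, MvPolynomial.X 0, MvPolynomial.X 1], by
    rintro _ _ (_ | _ | _) <;> simp [mul_comm (MvPolynomial.X (1 : Fin 2))]⟩

@[simp]
theorem toMvPolynomial_t : toMvPolynomial l t = 0 := by
  simp [toMvPolynomial, t]

@[simp]
theorem toMvPolynomial_x : toMvPolynomial l x = MvPolynomial.X 0 := by
  simp [toMvPolynomial, x]

@[simp]
theorem toMvPolynomial_y : toMvPolynomial l y = MvPolynomial.X 1 := by
  simp [toMvPolynomial, y]

theorem map_t_eq_zero (hl1 : l ≠ 1) {R : Type*} [CommRing R] [Algebra K R]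
    (g : GHA K (C l * X) →ₐ[K] R) : g t = 0 := by
  have h := congrArg g y_mul_x_sub_x_mul_y_of_linear
  rw [map_sub, map_mul, map_mul, mul_comm, sub_self, map_smul, eq_comm, smul_eq_zero] at h
  exact h.resolve_left (sub_ne_zero.2 hl1)

theorem algHom_eq_aeval_comp_toMvPolynomial (hl1 : l ≠ 1) {R : Type*} [CommRing R] [Algebra K R]
    (g : GHA K (C l * X) →ₐ[K] R) :
    g = (MvPolynomial.aeval ![g x, g y]).comp (toMvPolynomial l) :=
  algHom_ext (by simp [map_t_eq_zero hl1]) (by simp) (by simp)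

theorem map_eq_zero_of_toMvPolynomial_eq_zero (hl1 : l ≠ 1) {R : Type*} [CommRing R]
    [Algebra K R] (g : GHA K (C l * X) →ₐ[K] R) {b : GHA K (C l * X)}
    (hb : toMvPolynomial l b = 0) : g b = 0 := by
  rw [algHom_eq_aeval_comp_toMvPolynomial hl1 g, AlgHom.comp_apply, hb, map_zero]

end GHA

end

theorem stmt8 (p q : K) (hp1 : p ≠ 1) (hq1 : q ≠ 1)
    (l : K) (hl1 : l ≠ 1) :
    IsEmpty (GHpq K p q ≃ₐ[K] GHA K (C l * X)) := by
  refine ⟨fun e => ?_⟩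
  rcases GHpq.map_x_eq_zero_or_map_y_eq_zero hp1 hq1 ((GHA.toMvPolynomial l).comp e.toAlgHom)
    with h | h
  · simpa using GHA.map_eq_zero_of_toMvPolynomial_eq_zero hl1
      ((GHpq.character 1 0 (mul_zero 1)).comp e.symm.toAlgHom) h
  · simpa using GHA.map_eq_zero_of_toMvPolynomial_eq_zero hl1
      ((GHpq.character 0 1 (zero_mul 1)).comp e.symm.toAlgHom) h

end
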